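/- Let H be a real Hilbert space, (ε_n)_{n∈ℤ} a white-noise family (orthogonal, ‖ε_n‖ = σ > 0), φ₁, φ₂ ∈ ℝ with |φ₁| + |φ₂| < 1. Then the family (Y_t)_{t∈ℤ} with Y_t = ∑_{u≥0} A_u ε_{t-u} (A_u the Horadam numbers) is the unique family of vectors in the closed span of {ε_s : s ≤ t} solving Y_t = φ₁Y_{t-1} + φ₂Y_{t-2} + ε_t with sup_t ‖Y_t‖ < ∞. -/

import Mathlib

/-!
Since `|A (u + 2)| ≤ |φ1| |A (u + 1)| + |φ2| |A u|` with `|φ1| + |φ2| < 1`, the partial sums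
of `|A u|` are bounded, so the moving average `Y` is bounded by `σ ∑ |A u|`. Its partial sums lie
in the span of the past noise, and shifting the series by two terms and using the Horadam
recurrence gives the AR(2) equation. The difference of two bounded solutions solves the
homogeneous equation, so its supremum `M` satisfies `M ≤ (|φ1| + |φ2|) M`, forcing it to vanish.
-/

open Finset

section LinearRecurrence

variable {a : ℕ → ℝ} {α β : ℝ}

theorem sum_range_le_of_le_linear_recurrence (hα : 0 ≤ α) (hβ : 0 ≤ β) (hαβ : α + β < 1)
    (ha : ∀ u, 0 ≤ a u) (hrec : ∀ u, a (u + 2) ≤ α * a (u + 1) + β * a u) (n : ℕ) :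
    ∑ i ∈ range n, a i ≤ (a 0 + a 1) / (1 - (α + β)) := by
  set S := ∑ i ∈ range (n + 2), a i
  have hshift1 : ∑ i ∈ range n, a (i + 1) ≤ S := by
    calc ∑ i ∈ range n, a (i + 1) ≤ ∑ i ∈ range (n + 1), a (i + 1) :=
          sum_le_sum_of_subset_of_nonneg (range_mono (by omega)) fun i _ _ => ha _
      _ ≤ S := by simp only [S, sum_range_succ' a (n + 1)]; linarith [ha 0]
  have hshift0 : ∑ i ∈ range n, a i ≤ S :=
    sum_le_sum_of_subset_of_nonneg (range_mono (by omega)) fun i _ _ => ha i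
  have hS : S ≤ a 0 + a 1 + (α + β) * S := by
    calc S = a 0 + a 1 + ∑ i ∈ range n, a (i + 2) := by
          simp only [S, sum_range_succ', zero_add]; ring
      _ ≤ a 0 + a 1 + (α * ∑ i ∈ range n, a (i + 1) + β * ∑ i ∈ range n, a i) := by
          rw [mul_sum, mul_sum, ← sum_add_distrib]
          gcongr with i
          exact hrec i
      _ ≤ a 0 + a 1 + (α + β) * S := by nlinarith
  rw [le_div_iff₀ (by linarith)]
  nlinarith

theorem summable_of_le_linear_recurrence (hα : 0 ≤ α) (hβ : 0 ≤ β) (hαβ : α + β < 1)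
    (ha : ∀ u, 0 ≤ a u) (hrec : ∀ u, a (u + 2) ≤ α * a (u + 1) + β * a u) : Summable a :=
  summable_of_sum_range_le ha (sum_range_le_of_le_linear_recurrence hα hβ hαβ ha hrec)

end LinearRecurrence

theorem summable_abs_of_linear_recurrence {φ1 φ2 : ℝ} (h : |φ1| + |φ2| < 1) {A : ℕ → ℝ}
    (hA : ∀ u, A (u + 2) = φ1 * A (u + 1) + φ2 * A u) : Summable fun u => |A u| := by
  refine summable_of_le_linear_recurrence (abs_nonneg φ1) (abs_nonneg φ2) h
    (fun u => abs_nonneg _) fun u => ?_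
  rw [hA, ← abs_mul, ← abs_mul]
  exact abs_add_le _ _

theorem eq_zero_of_bounded_of_linear_recurrence {E : Type*} [NormedAddCommGroup E]
    [NormedSpace ℝ E] {φ1 φ2 : ℝ} (h : |φ1| + |φ2| < 1) {d : ℤ → E} {C : ℝ}
    (hC : ∀ t, ‖d t‖ ≤ C) (hrec : ∀ t, d t = φ1 • d (t - 1) + φ2 • d (t - 2)) : d = 0 := by
  have hbdd : BddAbove (Set.range fun t => ‖d t‖) := ⟨C, by rintro _ ⟨t, rfl⟩; exact hC t⟩
  set M := ⨆ t, ‖d t‖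
  have hle_M (t : ℤ) : ‖d t‖ ≤ M := le_ciSup hbdd t
  have hle_rM (t : ℤ) : ‖d t‖ ≤ (|φ1| + |φ2|) * M := by
    calc ‖d t‖ ≤ |φ1| * ‖d (t - 1)‖ + |φ2| * ‖d (t - 2)‖ := by
          rw [hrec t, ← Real.norm_eq_abs, ← Real.norm_eq_abs, ← norm_smul, ← norm_smul]
          exact norm_add_le _ _
      _ ≤ |φ1| * M + |φ2| * M := by gcongr <;> exact hle_M _
      _ = (|φ1| + |φ2|) * M := by ring
  have hM : M ≤ (|φ1| + |φ2|) * M := ciSup_le hle_rM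
  have hM0 : 0 ≤ M := (norm_nonneg _).trans (hle_M 0)
  funext t
  exact norm_le_zero_iff.mp ((hle_M t).trans (by nlinarith))

section MovingAverage

variable {E : Type*} [NormedAddCommGroup E] [NormedSpace ℝ E]

theorem mem_closure_span_of_hasSum_smul {A : ℕ → ℝ} {ε : ℤ → E} {t : ℤ} {y : E}
    (hy : HasSum (fun u : ℕ => A u • ε (t - u)) y) :
    y ∈ closure (Submodule.span ℝ {x : E | ∃ s : ℤ, s ≤ t ∧ x = ε s} : Set E) :=
  mem_closure_of_tendsto hy.tendsto_sum_nat <| Filter.Eventually.of_forall fun _ =>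
    Submodule.sum_mem _ fun u _ =>
      Submodule.smul_mem _ _ (Submodule.subset_span ⟨t - u, by omega, rfl⟩)

theorem norm_le_of_hasSum_smul {A : ℕ → ℝ} (hA : Summable fun u => |A u|) {x : ℕ → E}
    {σ : ℝ} (hx : ∀ u, ‖x u‖ = σ) {y : E} (hy : HasSum (fun u => A u • x u) y) :
    ‖y‖ ≤ (∑' u, |A u|) * σ :=
  hy.norm_le_of_bounded (hA.hasSum.mul_right σ) fun u => by rw [norm_smul, hx, Real.norm_eq_abs]

/-- The Horadam filter turns the noise into a solution of the AR(2) equation: the tail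
`u ≥ 2` of the series for `Y t` is `φ1 • (Y (t - 1) - ε (t - 1)) + φ2 • Y (t - 2)`. -/
theorem hasSum_horadam_smul_recurrence {φ1 φ2 : ℝ} {A : ℕ → ℝ} (hA0 : A 0 = 1)
    (hA1 : A 1 = φ1) (hA : ∀ u, A (u + 2) = φ1 * A (u + 1) + φ2 * A u) {ε Y : ℤ → E}
    (hY : ∀ t : ℤ, HasSum (fun u : ℕ => A u • ε (t - u)) (Y t)) (t : ℤ) :
    Y t = φ1 • Y (t - 1) + φ2 • Y (t - 2) + ε t := by
  have htail := (hasSum_nat_add_iff' 2).mpr (hY t)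
  have hprev := (hasSum_nat_add_iff' 1).mpr (hY (t - 1))
  have hcomb := (hprev.const_smul φ1).add ((hY (t - 2)).const_smul φ2)
  have hterm (u : ℕ) : A (u + 2) • ε (t - ↑(u + 2)) =
      φ1 • (A (u + 1) • ε (t - 1 - ↑(u + 1))) + φ2 • (A u • ε (t - 2 - u)) := by
    rw [hA, add_smul, mul_smul, mul_smul]
    congr 4 <;> push_cast <;> ring
  simp only [← hterm] at hcomb
  have := htail.unique hcomb
  simp only [sum_range_succ, sum_range_zero, hA0, hA1, Nat.cast_zero, Nat.cast_one,
    sub_zero, zero_add, one_smul] at this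
  linear_combination (norm := module) this

end MovingAverage

theorem linear_process_unique_solution_general (H : Type*) [NormedAddCommGroup H]
    [InnerProductSpace ℝ H]
    (σ : ℝ) (ε : ℤ → H)
    (hnorm : ∀ n : ℤ, ‖ε n‖ = σ)
    (φ1 φ2 : ℝ) (h : |φ1| + |φ2| < 1)
    (A : ℕ → ℝ) (hA0 : A 0 = 1) (hA1 : A 1 = φ1)
    (hA : ∀ u, A (u + 2) = φ1 * A (u + 1) + φ2 * A u)
    (Y : ℤ → H) (hY : ∀ t : ℤ, HasSum (fun u : ℕ => A u • ε (t - u)) (Y t)) :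
    (∀ t : ℤ, Y t ∈ closure (Submodule.span ℝ {x : H | ∃ s : ℤ, s ≤ t ∧ x = ε s} : Set H))
    ∧ (∀ t : ℤ, Y t = φ1 • Y (t - 1) + φ2 • Y (t - 2) + ε t)
    ∧ (∃ C : ℝ, ∀ t : ℤ, ‖Y t‖ ≤ C)
    ∧ ∀ Z : ℤ → H,
        (∀ t : ℤ, Z t ∈ closure (Submodule.span ℝ {x : H | ∃ s : ℤ, s ≤ t ∧ x = ε s} : Set H)) →
        (∀ t : ℤ, Z t = φ1 • Z (t - 1) + φ2 • Z (t - 2) + ε t) →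
        (∃ C : ℝ, ∀ t : ℤ, ‖Z t‖ ≤ C) → Z = Y := by
  have hYrec := hasSum_horadam_smul_recurrence hA0 hA1 hA hY
  have hYbound (t : ℤ) : ‖Y t‖ ≤ (∑' u, |A u|) * σ :=
    norm_le_of_hasSum_smul (summable_abs_of_linear_recurrence h hA) (fun _ => hnorm _) (hY t)
  refine ⟨fun t => mem_closure_span_of_hasSum_smul (hY t), hYrec, ⟨_, hYbound⟩, ?_⟩
  rintro Z - hZrec ⟨C, hZbound⟩
  rw [← sub_eq_zero]
  refine eq_zero_of_bounded_of_linear_recurrence h (C := C + (∑' u, |A u|) * σ)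
    (fun t => (norm_sub_le _ _).trans (add_le_add (hZbound t) (hYbound t))) fun t => ?_
  simp only [Pi.sub_apply]
  rw [hZrec t, hYrec t]
  module

theorem linear_process_unique_solution (H : Type*) [NormedAddCommGroup H]
    [InnerProductSpace ℝ H] [CompleteSpace H]
    (σ : ℝ) (hσ : 0 < σ) (ε : ℤ → H)
    (horth : ∀ m n : ℤ, m ≠ n → (inner ℝ (ε m) (ε n) : ℝ) = 0)
    (hnorm : ∀ n : ℤ, ‖ε n‖ = σ)
    (φ1 φ2 : ℝ) (h : |φ1| + |φ2| < 1)
    (A : ℕ → ℝ) (hA0 : A 0 = 1) (hA1 : A 1 = φ1)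
    (hA : ∀ u, A (u + 2) = φ1 * A (u + 1) + φ2 * A u)
    (Y : ℤ → H) (hY : ∀ t : ℤ, HasSum (fun u : ℕ => A u • ε (t - u)) (Y t)) :
    (∀ t : ℤ, Y t ∈ closure (Submodule.span ℝ {x : H | ∃ s : ℤ, s ≤ t ∧ x = ε s} : Set H))
    ∧ (∀ t : ℤ, Y t = φ1 • Y (t - 1) + φ2 • Y (t - 2) + ε t)
    ∧ (∃ C : ℝ, ∀ t : ℤ, ‖Y t‖ ≤ C)
    ∧ ∀ Z : ℤ → H,
        (∀ t : ℤ, Z t ∈ closure (Submodule.span ℝ {x : H | ∃ s : ℤ, s ≤ t ∧ x = ε s} : Set H)) →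
        (∀ t : ℤ, Z t = φ1 • Z (t - 1) + φ2 • Z (t - 2) + ε t) →
        (∃ C : ℝ, ∀ t : ℤ, ‖Z t‖ ≤ C) → Z = Y :=
  linear_process_unique_solution_general H σ ε hnorm φ1 φ2 h A hA0 hA1 hA Y hY
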